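/- For x ≥ 25, |ln(erfc(x)) - (-x² + ln(1 - 1/(2x²)) - ln(√π·x))| ≤ 3/(4x⁴). -/

import Mathlib

/-!
Write `S n x = ∑_{k<n} (-1)^k (2k-1)‼ / (2x²)^k` for the partial sums of the asymptotic
series of `erfc` and `T n x` for the first omitted term. The derivative of
`e^{-t²} S n t / (2t)` telescopes to `e^{-t²} (T n t - 1)`, so integrating over `(x, ∞)` shows
that `e^{-x²} S n x / (√π x)` is a lower bound for `erfc x` when `n` is even and an upper bound
when `n` is odd. The bounds for `n = 2` and `n = 5` differ by a factor at most `1 + 3/(4x⁴)`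
once `24 x² ≥ 105`, and `log (1 + ε) ≤ ε`.
-/

noncomputable def erfc (x : ℝ) : ℝ :=
  1 - (2 / Real.sqrt Real.pi) * ∫ t in (0:ℝ)..x, Real.exp (-t ^ 2)

open Real MeasureTheory Set Filter Topology Finset
open scoped Nat

lemma integral_Ioi_le_sub_of_hasDerivAt_of_le {f F F' : ℝ → ℝ} {a m : ℝ}
    (hderiv : ∀ t ∈ Ici a, HasDerivAt F (F' t) t) (hf : IntegrableOn f (Ioi a))
    (hle : ∀ t ∈ Ioi a, f t ≤ F' t) (hF : Tendsto F atTop (𝓝 m)) :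
    ∫ t in Ioi a, f t ≤ m - F a := by
  refine le_of_tendsto_of_tendsto (intervalIntegral_tendsto_integral_Ioi a hf tendsto_id)
    (hF.sub_const (F a)) ?_
  filter_upwards [eventually_ge_atTop a] with b hab
  exact intervalIntegral.integral_le_sub_of_hasDeriv_right_of_le hab
    (fun t ht => (hderiv t ht.1).continuousAt.continuousWithinAt)
    (fun t ht => (hderiv t ht.1.le).hasDerivWithinAt)
    ((integrableOn_Icc_iff_integrableOn_Ioc).2 (hf.mono_set Ioc_subset_Ioi_self))
    (fun t ht => hle t ht.1)

lemma sub_le_integral_Ioi_of_hasDerivAt_of_le {f F F' : ℝ → ℝ} {a m : ℝ}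
    (hderiv : ∀ t ∈ Ici a, HasDerivAt F (F' t) t) (hf : IntegrableOn f (Ioi a))
    (hle : ∀ t ∈ Ioi a, F' t ≤ f t) (hF : Tendsto F atTop (𝓝 m)) :
    m - F a ≤ ∫ t in Ioi a, f t := by
  refine le_of_tendsto_of_tendsto (hF.sub_const (F a))
    (intervalIntegral_tendsto_integral_Ioi a hf tendsto_id) ?_
  filter_upwards [eventually_ge_atTop a] with b hab
  exact intervalIntegral.sub_le_integral_of_hasDeriv_right_of_le hab
    (fun t ht => (hderiv t ht.1).continuousAt.continuousWithinAt)
    (fun t ht => (hderiv t ht.1.le).hasDerivWithinAt)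
    ((integrableOn_Icc_iff_integrableOn_Ioc).2 (hf.mono_set Ioc_subset_Ioi_self))
    (fun t ht => hle t ht.1)

lemma integrable_exp_neg_sq : Integrable fun t : ℝ => exp (-t ^ 2) := by
  simpa using integrable_exp_neg_mul_sq one_pos

lemma erfc_eq_mul_integral_Ioi (x : ℝ) :
    erfc x = 2 / √π * ∫ t in Ioi x, exp (-t ^ 2) := by
  have hhalf : ∫ t in Ioi (0 : ℝ), exp (-t ^ 2) = √π / 2 := by
    simpa using integral_gaussian_Ioi 1
  rw [erfc, ← intervalIntegral.integral_Ioi_sub_Ioi' integrable_exp_neg_sq.integrableOn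
    integrable_exp_neg_sq.integrableOn, hhalf]
  field_simp
  ring

/-- At `n = 0` the truncated subtraction gives `0‼ = 1`, the usual value of `(-1)‼`. -/
noncomputable def erfcAsymptoticTerm (n : ℕ) (x : ℝ) : ℝ :=
  (-1) ^ n * ((2 * n - 1)‼ : ℝ) / (2 * x ^ 2) ^ n

noncomputable def erfcAsymptoticSum (n : ℕ) (x : ℝ) : ℝ :=
  ∑ k ∈ range n, erfcAsymptoticTerm k x

lemma erfcAsymptoticTerm_zero (x : ℝ) : erfcAsymptoticTerm 0 x = 1 := by
  simp [erfcAsymptoticTerm]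

lemma hasDerivAt_exp_neg_sq (t : ℝ) :
    HasDerivAt (fun s => exp (-s ^ 2)) (-(2 * t) * exp (-t ^ 2)) t := by
  simpa [mul_comm] using ((hasDerivAt_pow 2 t).neg).exp

lemma hasDerivAt_exp_neg_sq_div_mul_erfcAsymptoticTerm (n : ℕ) {t : ℝ} (ht : t ≠ 0) :
    HasDerivAt (fun s => exp (-s ^ 2) / (2 * s) * erfcAsymptoticTerm n s)
      (exp (-t ^ 2) * (erfcAsymptoticTerm (n + 1) t - erfcAsymptoticTerm n t)) t := by
  unfold erfcAsymptoticTerm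
  have h := ((hasDerivAt_exp_neg_sq t).fun_div ((hasDerivAt_id' t).const_mul 2)
    (by simpa using ht)).fun_mul ((hasDerivAt_const t ((-1) ^ n * ((2 * n - 1)‼ : ℝ))).fun_div
      (((hasDerivAt_pow 2 t).const_mul 2).fun_pow n) (by positivity))
  refine h.congr_deriv ?_
  rw [show 2 * (n + 1) - 1 = 2 * n + 1 by omega, Nat.doubleFactorial_add_one]
  -- the split disposes of the exponent `n - 1` produced by `hasDerivAt_pow`
  rcases n with _ | n
  · field_simp
    norm_num
    ring
  · field_simp
    push_cast
    ring

lemma hasDerivAt_exp_neg_sq_div_mul_erfcAsymptoticSum (n : ℕ) {t : ℝ} (ht : t ≠ 0) :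
    HasDerivAt (fun s => exp (-s ^ 2) / (2 * s) * erfcAsymptoticSum n s)
      (exp (-t ^ 2) * (erfcAsymptoticTerm n t - 1)) t := by
  have h := HasDerivAt.fun_sum (u := range n)
    fun k _ => hasDerivAt_exp_neg_sq_div_mul_erfcAsymptoticTerm k ht
  simpa only [erfcAsymptoticSum, ← mul_sum, sum_range_sub (fun k => erfcAsymptoticTerm k t),
    erfcAsymptoticTerm_zero] using h

lemma tendsto_exp_neg_sq_div_mul_erfcAsymptoticSum (n : ℕ) :
    Tendsto (fun s => exp (-s ^ 2) / (2 * s) * erfcAsymptoticSum n s) atTop (𝓝 0) := by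
  have hexp : Tendsto (fun s : ℝ => exp (-s ^ 2) / (2 * s)) atTop (𝓝 0) :=
    (tendsto_exp_neg_atTop_nhds_zero.comp (tendsto_pow_atTop two_ne_zero)).div_atTop
      (tendsto_id.const_mul_atTop two_pos)
  have hterm (k : ℕ) : Tendsto (erfcAsymptoticTerm k) atTop
      (𝓝 ((-1) ^ k * ((2 * k - 1)‼ : ℝ) * 0 ^ k)) := by
    have h2 : Tendsto (fun s : ℝ => (2 * s ^ 2)⁻¹) atTop (𝓝 0) :=
      tendsto_inv_atTop_zero.comp ((tendsto_pow_atTop two_ne_zero).const_mul_atTop two_pos)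
    refine ((h2.pow k).const_mul _).congr fun s => ?_
    rw [erfcAsymptoticTerm, div_eq_mul_inv, inv_pow]
  simpa [erfcAsymptoticSum] using hexp.mul (tendsto_finsetSum (range n) fun k _ => hterm k)

lemma erfcAsymptoticTerm_nonneg {n : ℕ} (hn : Even n) (x : ℝ) :
    0 ≤ erfcAsymptoticTerm n x := by
  rw [erfcAsymptoticTerm, hn.neg_one_pow, one_mul]
  positivity

lemma erfcAsymptoticTerm_nonpos {n : ℕ} (hn : Odd n) (x : ℝ) :
    erfcAsymptoticTerm n x ≤ 0 := by
  rw [erfcAsymptoticTerm, hn.neg_one_pow, neg_one_mul, neg_div]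
  exact neg_nonpos.2 (by positivity)

lemma exp_neg_sq_div_mul_erfcAsymptoticSum_le_integral_Ioi {n : ℕ} (hn : Even n) {x : ℝ}
    (hx : 0 < x) :
    exp (-x ^ 2) / (2 * x) * erfcAsymptoticSum n x ≤ ∫ t in Ioi x, exp (-t ^ 2) := by
  have h := sub_le_integral_Ioi_of_hasDerivAt_of_le
    (fun t ht => (hasDerivAt_exp_neg_sq_div_mul_erfcAsymptoticSum n (hx.trans_le ht).ne').neg)
    integrable_exp_neg_sq.integrableOn
    (fun t _ => by nlinarith [exp_pos (-t ^ 2), erfcAsymptoticTerm_nonneg hn t])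
    (tendsto_exp_neg_sq_div_mul_erfcAsymptoticSum n).neg
  simpa using h

lemma integral_Ioi_le_exp_neg_sq_div_mul_erfcAsymptoticSum {n : ℕ} (hn : Odd n) {x : ℝ}
    (hx : 0 < x) :
    ∫ t in Ioi x, exp (-t ^ 2) ≤ exp (-x ^ 2) / (2 * x) * erfcAsymptoticSum n x := by
  have h := integral_Ioi_le_sub_of_hasDerivAt_of_le
    (fun t ht => (hasDerivAt_exp_neg_sq_div_mul_erfcAsymptoticSum n (hx.trans_le ht).ne').neg)
    integrable_exp_neg_sq.integrableOn
    (fun t _ => by nlinarith [exp_pos (-t ^ 2), erfcAsymptoticTerm_nonpos hn t])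
    (tendsto_exp_neg_sq_div_mul_erfcAsymptoticSum n).neg
  simpa using h

lemma two_div_sqrt_pi_mul_exp_neg_sq_div (x : ℝ) :
    2 / √π * (exp (-x ^ 2) / (2 * x)) = exp (-x ^ 2) / (√π * x) := by
  field_simp

lemma exp_neg_sq_div_mul_erfcAsymptoticSum_le_erfc {n : ℕ} (hn : Even n) {x : ℝ} (hx : 0 < x) :
    exp (-x ^ 2) / (√π * x) * erfcAsymptoticSum n x ≤ erfc x := by
  rw [erfc_eq_mul_integral_Ioi, ← two_div_sqrt_pi_mul_exp_neg_sq_div, mul_assoc]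
  gcongr
  exact exp_neg_sq_div_mul_erfcAsymptoticSum_le_integral_Ioi hn hx

lemma erfc_le_exp_neg_sq_div_mul_erfcAsymptoticSum {n : ℕ} (hn : Odd n) {x : ℝ} (hx : 0 < x) :
    erfc x ≤ exp (-x ^ 2) / (√π * x) * erfcAsymptoticSum n x := by
  rw [erfc_eq_mul_integral_Ioi, ← two_div_sqrt_pi_mul_exp_neg_sq_div, mul_assoc]
  gcongr
  exact integral_Ioi_le_exp_neg_sq_div_mul_erfcAsymptoticSum hn hx

lemma erfcAsymptoticSum_two (x : ℝ) : erfcAsymptoticSum 2 x = 1 - 1 / (2 * x ^ 2) := by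
  norm_num [erfcAsymptoticSum, erfcAsymptoticTerm, sum_range_succ, sub_eq_add_neg, neg_div]

lemma erfcAsymptoticSum_five (x : ℝ) : erfcAsymptoticSum 5 x =
    1 - 1 / (2 * x ^ 2) + 3 / (2 * x ^ 2) ^ 2 - 15 / (2 * x ^ 2) ^ 3 + 105 / (2 * x ^ 2) ^ 4 := by
  norm_num [erfcAsymptoticSum, erfcAsymptoticTerm, sum_range_succ, Nat.doubleFactorial,
    sub_eq_add_neg, neg_div]

lemma erfcAsymptoticSum_five_le {x : ℝ} (hx : 105 ≤ 24 * x ^ 2) :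
    erfcAsymptoticSum 5 x ≤ erfcAsymptoticSum 2 x * (1 + 3 / (4 * x ^ 4)) := by
  have hx0 : x ≠ 0 := by rintro rfl; norm_num at hx
  rw [erfcAsymptoticSum_two, erfcAsymptoticSum_five, ← sub_nonneg]
  refine (div_nonneg (by linarith) (by positivity) :
    0 ≤ (24 * x ^ 2 - 105) / (16 * x ^ 8)).trans_eq ?_
  field_simp
  ring

lemma abs_log_sub_log_le_of_le_mul {a b ε : ℝ} (ha : 0 < a) (hab : a ≤ b)
    (hb : b ≤ a * (1 + ε)) : |log b - log a| ≤ ε := by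
  have hb0 : 0 < b := ha.trans_le hab
  rw [abs_of_nonneg (sub_nonneg.2 (log_le_log ha hab)), ← log_div hb0.ne' ha.ne']
  have : b / a ≤ 1 + ε := (div_le_iff₀ ha).2 (by linarith)
  linarith [log_le_sub_one_of_pos (div_pos hb0 ha)]

theorem log_erfc_approx_error (x : ℝ) (hx : 25 ≤ x) :
    |Real.log (erfc x)
        - (-x ^ 2 + Real.log (1 - 1 / (2 * x ^ 2)) - Real.log (Real.sqrt Real.pi * x))|
      ≤ 3 / (4 * x ^ 4) := by
  have hx0 : 0 < x := by linarith
  have hS : 0 < 1 - 1 / (2 * x ^ 2) := by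
    rw [sub_pos, div_lt_one (by positivity)]
    nlinarith
  have hlog : log (exp (-x ^ 2) / (√π * x) * erfcAsymptoticSum 2 x)
      = -x ^ 2 + log (1 - 1 / (2 * x ^ 2)) - log (√π * x) := by
    rw [erfcAsymptoticSum_two, log_mul (by positivity) hS.ne', log_div (by positivity)
      (by positivity), log_exp]
    ring
  rw [← hlog]
  refine abs_log_sub_log_le_of_le_mul (by rw [erfcAsymptoticSum_two]; positivity)
    (exp_neg_sq_div_mul_erfcAsymptoticSum_le_erfc even_two hx0) ?_
  calc erfc x ≤ exp (-x ^ 2) / (√π * x) * erfcAsymptoticSum 5 x :=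
        erfc_le_exp_neg_sq_div_mul_erfcAsymptoticSum (by decide) hx0
    _ ≤ exp (-x ^ 2) / (√π * x) * (erfcAsymptoticSum 2 x * (1 + 3 / (4 * x ^ 4))) := by
        gcongr
        exact erfcAsymptoticSum_five_le (by nlinarith)
    _ = _ := by ring
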